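/- arXiv:2510.03828 — 4 statements merged into one kernel-verified Lean document; each statement's English description precedes it below -/
import Mathlib

section
/- Let A, B be integers with 4A³ + 27B² ≠ 0 and set X = max(|A|³, |B|²), D = 4A³ + 27B², Δ = −16·D and j = 1728·4A³/D ∈ ℚ. Then h(Δ) ≤ log X + 6.21, h(j) ≤ log X + 8.85, and log X ≤ 2·max{h(j), h(Δ)} + 0.7. -/
open scoped TensorProduct

noncomputable section

/-- The logarithmic Weil height of a rational number:
`h(p/q) = log max (|p|, q)` for `p/q` in lowest terms. -/
def qh (q : ℚ) : ℝ := Real.log (max (|q.num| : ℝ) (q.den : ℝ))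

/-- The short Weierstrass curve `y² = x³ + Ax + B` over `ℚ`. -/
def Ecurve (A B : ℤ) : WeierstrassCurve.Affine ℚ :=
  { a₁ := 0, a₂ := 0, a₃ := 0, a₄ := (A : ℚ), a₆ := (B : ℚ) }

/-- `X = max (|A|³, |B|²)` as a real number. -/
def Xval (A B : ℤ) : ℝ := max (|(A : ℝ)| ^ 3) (|(B : ℝ)| ^ 2)

/-- The x-coordinate of an affine point (with junk value `0` at the point at infinity). -/
def xCoord {W : WeierstrassCurve.Affine ℚ} : W.Point → ℚ
  | .zero => 0
  | @WeierstrassCurve.Affine.Point.some _ _ _ x _ _ => x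

/-- `hh : W.Point → ℝ` is a canonical height for `W`: it vanishes on points of finite
order, and for every point `P` of infinite order, `h(x(2ⁿ P)) / 4ⁿ → hh P`. -/
def IsCanonicalHeight (W : WeierstrassCurve.Affine ℚ) (hh : W.Point → ℝ) : Prop :=
  (∀ P : W.Point, IsOfFinAddOrder P → hh P = 0) ∧
  (∀ P : W.Point, ¬ IsOfFinAddOrder P →
    Filter.Tendsto (fun n : ℕ => qh (xCoord ((2 ^ n : ℕ) • P)) / 4 ^ n)
      Filter.atTop (nhds (hh P)))

/-- `cos θ_{P,Q} = (ĥ(P+Q) − ĥ(P) − ĥ(Q)) / (2 √(ĥ(P) ĥ(Q)))`. -/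
def cosAngle {W : WeierstrassCurve.Affine ℚ} (hh : W.Point → ℝ) (P Q : W.Point) : ℝ :=
  (hh (P + Q) - hh P - hh Q) / (2 * Real.sqrt (hh P * hh Q))

/-- The rank `dim_ℚ (ℚ ⊗_ℤ G)` of an abelian group `G`. -/
def rankQ (G : Type*) [AddCommGroup G] : ℕ :=
  Module.finrank ℚ (ℚ ⊗[ℤ] G)

end

/-!
Since `j · D = 6912 A³` and `Δ = -16 D`, the heights of `Δ` and `j` are bounded by the logs of
`16 |D|` and `max (6912 |A|³, |D|)`, and `|D| ≤ 31 X`. Conversely, if `H` is the larger of the two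
heights then `16 |D| ≤ e^H` and `|j| ≤ e^H`, so `6912 |A|³ = |j| |D| ≤ e^{2H} / 16` and
`27 B² = D - 4 A³ ≤ |D| + 4 |A|³`, whence `X ≤ e^{2H}`.
-/

lemma Real.log_496_le : Real.log 496 ≤ 6.21 := by
  have h2 : Real.log 2 < 0.6931471808 := Real.log_two_lt_d9
  have hsplit : Real.log 496 = 9 * Real.log 2 + Real.log (31 / 32) := by
    rw [show (496 : ℝ) = 2 ^ 9 * (31 / 32) by norm_num,
      Real.log_mul (by positivity) (by norm_num), Real.log_pow]
    push_cast; ring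
  have hrest : Real.log ((31 : ℝ) / 32) ≤ 31 / 32 - 1 := Real.log_le_sub_one_of_pos (by norm_num)
  linarith

lemma Real.log_6912_le : Real.log 6912 ≤ 8.85 := by
  have h2 : Real.log 2 < 0.6931471808 := Real.log_two_lt_d9
  have hsplit : Real.log 6912 = 13 * Real.log 2 + Real.log (27 / 32) := by
    rw [show (6912 : ℝ) = 2 ^ 13 * (27 / 32) by norm_num,
      Real.log_mul (by positivity) (by norm_num), Real.log_pow]
    push_cast; ring
  -- `log (27/32) ≈ -0.17` is too far from `0` for `log x ≤ x - 1`; `(27/32)⁴ · 2` is close to `1`.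
  have hfourth : 4 * Real.log ((27 : ℝ) / 32) = Real.log (531441 / 524288) - Real.log 2 := by
    rw [show (531441 : ℝ) / 524288 = (27 / 32) ^ 4 * 2 by norm_num,
      Real.log_mul (by positivity) (by norm_num), Real.log_pow]
    push_cast; ring
  have hrest : Real.log ((531441 : ℝ) / 524288) ≤ 531441 / 524288 - 1 :=
    Real.log_le_sub_one_of_pos (by norm_num)
  linarith

lemma qh_nonneg (q : ℚ) : 0 ≤ qh q :=
  Real.log_nonneg (le_max_of_le_right (by exact_mod_cast q.pos))

lemma qh_intCast (n : ℤ) : qh n = Real.log |(n : ℝ)| := by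
  rcases eq_or_ne n 0 with rfl | hn
  · simp [qh]
  · have hn1 : (1 : ℝ) ≤ |(n : ℝ)| := by exact_mod_cast Int.one_le_abs hn
    simp [qh, max_eq_left hn1]

lemma abs_le_exp_qh (q : ℚ) : |(q : ℝ)| ≤ Real.exp (qh q) := by
  have hden : (1 : ℝ) ≤ q.den := by exact_mod_cast q.pos
  rw [qh, Real.exp_log (one_pos.trans_le (le_max_of_le_right hden)), Rat.cast_def, abs_div,
    Nat.abs_cast]
  exact (div_le_self (abs_nonneg _) hden).trans (le_max_left _ _)

lemma qh_div_le (a b : ℤ) (hb : b ≠ 0) :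
    qh ((a : ℚ) / b) ≤ Real.log (max |(a : ℝ)| |(b : ℝ)|) := by
  rw [← Rat.divInt_eq_div]
  have hnum : |((Rat.divInt a b).num : ℝ)| ≤ |(a : ℝ)| := by
    rcases eq_or_ne a 0 with rfl | ha
    · simp
    · exact_mod_cast Int.le_of_dvd (abs_pos.2 ha) ((abs_dvd_abs _ _).2 (Rat.num_dvd a hb))
  have hden : ((Rat.divInt a b).den : ℝ) ≤ |(b : ℝ)| := by
    exact_mod_cast Int.le_of_dvd (abs_pos.2 hb) ((dvd_abs _ _).2 (Rat.den_dvd a b))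
  have hden1 : (1 : ℝ) ≤ (Rat.divInt a b).den := by exact_mod_cast (Rat.divInt a b).pos
  exact Real.log_le_log (one_pos.trans_le (le_max_of_le_right hden1)) (max_le_max hnum hden)

lemma one_le_Xval {A B : ℤ} (hAB : 4 * A ^ 3 + 27 * B ^ 2 ≠ 0) : 1 ≤ Xval A B := by
  rcases eq_or_ne A 0 with rfl | hA
  · have hB : B ≠ 0 := by rintro rfl; simp at hAB
    exact le_max_of_le_right (one_le_pow₀ (by exact_mod_cast Int.one_le_abs hB))
  · exact le_max_of_le_left (one_le_pow₀ (by exact_mod_cast Int.one_le_abs hA))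

lemma abs_discr_le_Xval (A B : ℤ) : |(4 * A ^ 3 + 27 * B ^ 2 : ℝ)| ≤ 31 * Xval A B := by
  have hA := le_max_left (|(A : ℝ)| ^ 3) (|(B : ℝ)| ^ 2)
  have hB := le_max_right (|(A : ℝ)| ^ 3) (|(B : ℝ)| ^ 2)
  calc |(4 * A ^ 3 + 27 * B ^ 2 : ℝ)| ≤ 4 * |(A : ℝ)| ^ 3 + 27 * |(B : ℝ)| ^ 2 := by
        refine (abs_add_le _ _).trans_eq ?_
        rw [abs_mul, abs_mul, abs_pow, abs_pow]; norm_num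
    _ ≤ 31 * Xval A B := by unfold Xval; linarith

lemma Xval_le_sq {A B : ℤ} {D E : ℝ} (hD : D = 4 * A ^ 3 + 27 * B ^ 2) (hE : 1 ≤ E)
    (hDE : 16 * |D| ≤ E) (hAE : 6912 * |(A : ℝ)| ^ 3 ≤ E * |D|) : Xval A B ≤ E ^ 2 := by
  have hA : 6912 * |(A : ℝ)| ^ 3 ≤ E ^ 2 := by nlinarith [abs_nonneg D]
  have hB : 27 * (B : ℝ) ^ 2 ≤ |D| + 4 * |(A : ℝ)| ^ 3 := by
    have := neg_abs_le (4 * (A : ℝ) ^ 3)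
    rw [abs_mul, abs_pow, abs_of_pos (by norm_num : (0 : ℝ) < 4)] at this
    linarith [le_abs_self D]
  refine max_le ?_ ?_
  · nlinarith [pow_nonneg (abs_nonneg (A : ℝ)) 3]
  · rw [sq_abs]; nlinarith [pow_nonneg (abs_nonneg (A : ℝ)) 3]

lemma qh_discr_le {A B : ℤ} (hAB : 4 * A ^ 3 + 27 * B ^ 2 ≠ 0) :
    qh ((-16 * (4 * A ^ 3 + 27 * B ^ 2) : ℤ) : ℚ) ≤ Real.log (Xval A B) + 6.21 := by
  have hΔ : ((-16 * (4 * A ^ 3 + 27 * B ^ 2) : ℤ) : ℝ) ≠ 0 := by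
    exact_mod_cast mul_ne_zero (by norm_num) hAB
  rw [qh_intCast]
  calc Real.log |((-16 * (4 * A ^ 3 + 27 * B ^ 2) : ℤ) : ℝ)| ≤ Real.log (496 * Xval A B) := by
        refine Real.log_le_log (abs_pos.2 hΔ) ?_
        push_cast
        rw [abs_mul, abs_neg, abs_of_pos (by norm_num : (0 : ℝ) < 16)]
        linarith [abs_discr_le_Xval A B]
    _ = Real.log 496 + Real.log (Xval A B) :=
        Real.log_mul (by norm_num) (by linarith [one_le_Xval hAB])
    _ ≤ Real.log (Xval A B) + 6.21 := by linarith [Real.log_496_le]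

lemma qh_jInvariant_le {A B : ℤ} (hAB : 4 * A ^ 3 + 27 * B ^ 2 ≠ 0) :
    qh (1728 * (4 * (A : ℚ) ^ 3) / ((4 * A ^ 3 + 27 * B ^ 2 : ℤ) : ℚ)) ≤
      Real.log (Xval A B) + 8.85 := by
  have hX := one_le_Xval hAB
  have hD1 : (1 : ℝ) ≤ |((4 * A ^ 3 + 27 * B ^ 2 : ℤ) : ℝ)| := by
    exact_mod_cast Int.one_le_abs hAB
  have hj : 1728 * (4 * (A : ℚ) ^ 3) / ((4 * A ^ 3 + 27 * B ^ 2 : ℤ) : ℚ) =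
      ((6912 * A ^ 3 : ℤ) : ℚ) / ((4 * A ^ 3 + 27 * B ^ 2 : ℤ) : ℚ) := by
    push_cast; ring
  have hnum : |((6912 * A ^ 3 : ℤ) : ℝ)| ≤ 6912 * Xval A B := by
    unfold Xval
    push_cast
    rw [abs_mul, abs_pow, abs_of_pos (by norm_num : (0 : ℝ) < 6912)]
    linarith [le_max_left (|(A : ℝ)| ^ 3) (|(B : ℝ)| ^ 2)]
  have hden : |((4 * A ^ 3 + 27 * B ^ 2 : ℤ) : ℝ)| ≤ 6912 * Xval A B := by
    push_cast
    linarith [abs_discr_le_Xval A B]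
  rw [hj]
  calc _ ≤ Real.log (max |((6912 * A ^ 3 : ℤ) : ℝ)| |((4 * A ^ 3 + 27 * B ^ 2 : ℤ) : ℝ)|) :=
        qh_div_le _ _ hAB
    _ ≤ Real.log (6912 * Xval A B) :=
        Real.log_le_log (one_pos.trans_le (hD1.trans (le_max_right _ _))) (max_le hnum hden)
    _ = Real.log 6912 + Real.log (Xval A B) := Real.log_mul (by norm_num) (by linarith)
    _ ≤ Real.log (Xval A B) + 8.85 := by linarith [Real.log_6912_le]

lemma log_Xval_le_two_mul_max_qh {A B : ℤ} (hAB : 4 * A ^ 3 + 27 * B ^ 2 ≠ 0) :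
    Real.log (Xval A B) ≤
      2 * max (qh (1728 * (4 * (A : ℚ) ^ 3) / ((4 * A ^ 3 + 27 * B ^ 2 : ℤ) : ℚ)))
        (qh ((-16 * (4 * A ^ 3 + 27 * B ^ 2) : ℤ) : ℚ)) := by
  set D : ℤ := 4 * A ^ 3 + 27 * B ^ 2 with hD
  set j : ℚ := 1728 * (4 * (A : ℚ) ^ 3) / (D : ℚ)
  set M := max (qh j) (qh ((-16 * D : ℤ) : ℚ))
  have hDR : (D : ℝ) ≠ 0 := by exact_mod_cast hAB
  have hjD : |(j : ℝ)| * |(D : ℝ)| = 6912 * |(A : ℝ)| ^ 3 := by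
    rw [← abs_mul, show (j : ℝ) = 6912 * (A : ℝ) ^ 3 / D by simp only [j]; push_cast; ring,
      div_mul_cancel₀ _ hDR, abs_mul, abs_pow, abs_of_pos (by norm_num : (0 : ℝ) < 6912)]
  have hjE : |(j : ℝ)| ≤ Real.exp M :=
    (abs_le_exp_qh j).trans (Real.exp_le_exp.2 (le_max_left _ _))
  have hDE : 16 * |(D : ℝ)| ≤ Real.exp M := by
    have : |(((-16 * D : ℤ) : ℚ) : ℝ)| ≤ Real.exp M :=
      (abs_le_exp_qh _).trans (Real.exp_le_exp.2 (le_max_right _ _))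
    push_cast at this
    rwa [abs_mul, abs_neg, abs_of_pos (by norm_num : (0 : ℝ) < 16)] at this
  have hE : 1 ≤ Real.exp M := Real.one_le_exp ((qh_nonneg j).trans (le_max_left _ _))
  have hX : Xval A B ≤ Real.exp M ^ 2 :=
    Xval_le_sq (by push_cast [hD]; ring) hE hDE
      (hjD ▸ mul_le_mul_of_nonneg_right hjE (abs_nonneg _))
  calc Real.log (Xval A B) ≤ Real.log (Real.exp M ^ 2) :=
        Real.log_le_log (by linarith [one_le_Xval hAB]) hX
    _ = 2 * M := by rw [Real.log_pow, Real.log_exp]; push_cast; ring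

theorem statement0 (A B : ℤ) (hAB : 4 * A ^ 3 + 27 * B ^ 2 ≠ 0)
    (D : ℤ) (hD : D = 4 * A ^ 3 + 27 * B ^ 2)
    (Δ : ℤ) (hΔ : Δ = -16 * D)
    (j : ℚ) (hj : j = 1728 * (4 * (A : ℚ) ^ 3) / (D : ℚ)) :
    qh (Δ : ℚ) ≤ Real.log (Xval A B) + 6.21 ∧
    qh j ≤ Real.log (Xval A B) + 8.85 ∧
    Real.log (Xval A B) ≤ 2 * max (qh j) (qh (Δ : ℚ)) + 0.7 := by
  subst hj hΔ hD
  refine ⟨qh_discr_le hAB, qh_jInvariant_le hAB, ?_⟩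
  linarith [log_Xval_le_two_mul_max_qh hAB]
end

section
/- Let N be a positive integer, let a, u be positive integers and b, v integers with v ≠ 0, gcd(a, b) = 1 and gcd(u, v) = 1, and set s = lcm(a, u). For 1 ≤ i ≤ N let r_i = b/a + (i−1)·(v/u) and let x_i = s·r_i (which is an integer). Let 0 < δ < 1 be real and m = ⌈1/δ⌉. If s ≥ ∏_{j=1}^{2m−1} j!, then the number of indices i ∈ {1, …, N} with gcd(x_i, s) ≤ s^δ is at least ⌊N/(2m)⌋. -/
open scoped TensorProduct

/-! Write `s = A a = U u` with `A, U` coprime, so that `x_i = A b + (i - 1) U v`. A common divisor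
of `s`, `x_i` and `U v` is a unit, hence `gcd (gcd (x_i, s), gcd (x_j, s))` divides `j - i`.
Comparing `p`-adic valuations with an index of maximal valuation, the product of the
`gcd (x_i, s)` over `L` consecutive indices then divides `s · (L - 1)!`. For `L = 2m` this is
at most `s²`, while `2mδ ≥ 2`, so not all of them exceed `s^δ`; the `⌊N / 2m⌋` disjoint windows
of length `2m` in `[1, N]` each contribute an index. -/

open Finset

lemma Real.pow_le_rpow_pow {x δ : ℝ} {k n : ℕ} (hx : 1 ≤ x) (h : (k : ℝ) ≤ δ * n) :
    x ^ k ≤ (x ^ δ) ^ n := by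
  rw [← Real.rpow_mul_natCast (by linarith), ← Real.rpow_natCast]
  exact Real.rpow_le_rpow_of_exponent_le hx h

namespace Nat

lemma prod_Ico_dist_left (n k : ℕ) : ∏ i ∈ Ico n (n + k), dist i (n + k) = k ! := by
  rw [prod_Ico_eq_prod_range, Nat.add_sub_cancel_left, ← prod_range_add_one_eq_factorial,
    ← prod_range_reflect]
  refine prod_congr rfl fun j hj => ?_
  rw [mem_range] at hj
  rw [dist_eq_sub_of_le (by omega)]
  omega

lemma prod_Ico_dist_right (n k : ℕ) : ∏ i ∈ Ico (n + 1) (n + 1 + k), dist i n = k ! := by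
  rw [prod_Ico_eq_prod_range, Nat.add_sub_cancel_left, ← prod_range_add_one_eq_factorial]
  refine prod_congr rfl fun j _ => ?_
  rw [dist_eq_sub_of_le_right (by omega)]
  omega

lemma prod_Ico_erase_dist_dvd_factorial {c L i₀ : ℕ} (hi₀ : i₀ ∈ Ico c (c + L)) :
    ∏ i ∈ (Ico c (c + L)).erase i₀, dist i i₀ ∣ (L - 1)! := by
  obtain ⟨k₁, rfl⟩ : ∃ k, i₀ = c + k := ⟨i₀ - c, by grind⟩
  obtain ⟨k₂, rfl⟩ : ∃ k, L = k₁ + 1 + k := ⟨L - (k₁ + 1), by grind⟩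
  have hsplit : (Ico c (c + (k₁ + 1 + k₂))).erase (c + k₁) =
      Ico c (c + k₁) ∪ Ico (c + k₁ + 1) (c + k₁ + 1 + k₂) := by
    ext i
    simp only [mem_erase, mem_Ico, mem_union]
    omega
  have hdisj : Disjoint (Ico c (c + k₁)) (Ico (c + k₁ + 1) (c + k₁ + 1 + k₂)) := by
    rw [disjoint_left]
    intro i hi hi'
    simp only [mem_Ico] at hi hi'
    omega
  rw [hsplit, prod_union hdisj, prod_Ico_dist_left, prod_Ico_dist_right,
    show k₁ + 1 + k₂ - 1 = k₁ + k₂ by omega]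
  exact factorial_mul_factorial_dvd_factorial_add k₁ k₂

lemma prod_dvd_mul_of_gcd_dvd_dist {W : Finset ℕ} {D : ℕ → ℕ} {S M : ℕ} (hS : S ≠ 0)
    (hM : M ≠ 0) (hDS : ∀ i, D i ∣ S) (hgcd : ∀ i j, gcd (D i) (D j) ∣ dist i j)
    (hdist : ∀ i₀ ∈ W, ∏ i ∈ W.erase i₀, dist i i₀ ∣ M) :
    ∏ i ∈ W, D i ∣ S * M := by
  have hD : ∀ i, D i ≠ 0 := fun i h => hS (Nat.eq_zero_of_zero_dvd (h ▸ hDS i))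
  have vp_le {d n : ℕ} (hn : n ≠ 0) (h : d ∣ n) (p : ℕ) : d.factorization p ≤ n.factorization p :=
    (factorization_le_iff_dvd (ne_zero_of_dvd_ne_zero hn h) hn).2 h p
  rcases W.eq_empty_or_nonempty with rfl | hW
  · simp
  refine (factorization_prime_le_iff_dvd (prod_ne_zero_iff.2 fun i _ => hD i)
    (mul_ne_zero hS hM)).1 fun p _ => ?_
  -- with `v_p (D i₀)` maximal, `v_p (D i) = v_p (gcd (D i) (D i₀)) ≤ v_p (dist i i₀)` for `i ≠ i₀`
  obtain ⟨i₀, hi₀, hmax⟩ := W.exists_max_image (fun i => (D i).factorization p) hW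
  have hdist0 : ∀ i ∈ W.erase i₀, dist i i₀ ≠ 0 :=
    fun i hi => mt eq_of_dist_eq_zero (ne_of_mem_erase hi)
  have hle : ∀ i ∈ W.erase i₀, (D i).factorization p ≤ (dist i i₀).factorization p := by
    intro i hi
    have hgcd_vp : (gcd (D i) (D i₀)).factorization p = (D i).factorization p := by
      rw [factorization_gcd (hD i) (hD i₀), Finsupp.inf_apply,
        inf_eq_left.2 (hmax i (mem_of_mem_erase hi))]
    exact hgcd_vp ▸ vp_le (hdist0 i hi) (hgcd i i₀) p
  calc (∏ i ∈ W, D i).factorization p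
      = (D i₀).factorization p + ∑ i ∈ W.erase i₀, (D i).factorization p := by
        rw [factorization_prod fun i _ => hD i, Finset.sum_apply', ← add_sum_erase _ _ hi₀]
    _ ≤ S.factorization p + (∏ i ∈ W.erase i₀, dist i i₀).factorization p := by
        rw [factorization_prod hdist0, Finset.sum_apply']
        exact add_le_add (vp_le hS (hDS i₀) p) (sum_le_sum hle)
    _ ≤ S.factorization p + M.factorization p := by grw [vp_le hM (hdist i₀ hi₀) p]
    _ = (S * M).factorization p := by rw [factorization_mul hS hM, Finsupp.add_apply]

lemma exists_mem_Ico_le_rpow {D : ℕ → ℕ} {S L : ℕ} (hS : S ≠ 0) (hL : 0 < L)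
    (hDS : ∀ i, D i ∣ S) (hgcd : ∀ i j, gcd (D i) (D j) ∣ dist i j) (hfact : (L - 1)! ≤ S)
    {δ : ℝ} (hδ : 2 ≤ δ * L) (c : ℕ) : ∃ i ∈ Ico c (c + L), (D i : ℝ) ≤ (S : ℝ) ^ δ := by
  by_contra! hlt
  have hdvd : ∏ i ∈ Ico c (c + L), D i ∣ S * (L - 1)! :=
    prod_dvd_mul_of_gcd_dvd_dist hS (factorial_ne_zero _) hDS hgcd
      fun _ hi₀ => prod_Ico_erase_dist_dvd_factorial hi₀
  have hS1 : (1 : ℝ) ≤ S := by exact_mod_cast one_le_iff_ne_zero.2 hS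
  refine lt_irrefl (((S : ℝ) ^ δ) ^ L) ?_
  calc ((S : ℝ) ^ δ) ^ L
      < ∏ i ∈ Ico c (c + L), (D i : ℝ) := by
        simpa using prod_lt_prod_of_nonempty (fun _ _ => by positivity) hlt
          (nonempty_Ico.2 (by omega))
    _ ≤ S * (L - 1)! := by exact_mod_cast le_of_dvd (by positivity) hdvd
    _ ≤ S ^ 2 := by rw [sq]; gcongr
    _ ≤ ((S : ℝ) ^ δ) ^ L := Real.pow_le_rpow_pow hS1 (by exact_mod_cast hδ)

end Nat

lemma le_card_filter_Icc_of_forall_exists_mem_Ico {P : ℕ → Prop} [DecidablePred P] {L : ℕ}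
    (h : ∀ c, ∃ i ∈ Ico c (c + L), P i) (N : ℕ) : N / L ≤ #{i ∈ Icc 1 N | P i} := by
  rw [← card_range (N / L)]
  refine card_le_card_of_surjOn (fun i => (i - 1) / L) fun k hk => ?_
  rw [coe_range, Set.mem_Iio] at hk
  obtain ⟨i, hi, hPi⟩ := h (L * k + 1)
  rw [mem_Ico] at hi
  have hkN : L * (k + 1) ≤ N := (Nat.mul_le_mul_left L hk).trans (Nat.mul_div_le N L)
  refine ⟨i, mem_filter.2 ⟨mem_Icc.2 ⟨by omega, by grind⟩, hPi⟩, ?_⟩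
  exact Nat.div_eq_of_lt_le (by grind) (by grind)

lemma isUnit_of_dvd_mul_of_isCoprime {R : Type*} [CommSemiring R] {U u v y k : R}
    (hUy : IsCoprime U y) (huv : IsCoprime u v) (hku : k ∣ U * u) (hky : k ∣ y)
    (hkv : k ∣ U * v) : IsUnit k := by
  have hkU : IsCoprime k U := (hUy.of_isCoprime_of_dvd_right hky).symm
  have hku' : IsCoprime k u := (huv.of_isCoprime_of_dvd_right (hkU.dvd_of_dvd_mul_left hkv)).symm
  exact hkU.isUnit_of_dvd' dvd_rfl (hku'.dvd_of_dvd_mul_right hku)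

namespace Int

lemma exists_isCoprime_lcm_eq {a u : ℤ} (ha : 0 < a) (hu : 0 < u) :
    ∃ A U : ℤ, IsCoprime A U ∧ U ∣ a ∧ (lcm a u : ℤ) = A * a ∧ (lcm a u : ℤ) = U * u := by
  have hg : 0 < gcd a u := gcd_pos_of_ne_zero_left u ha.ne'
  have hga : (gcd a u : ℤ) ∣ a := gcd_dvd_left _ _
  have hgu : (gcd a u : ℤ) ∣ u := gcd_dvd_right _ _
  have hgl : (gcd a u : ℤ) * lcm a u = a * u := by
    rw [← natAbs_of_nonneg (mul_pos ha hu).le, natAbs_mul]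
    exact_mod_cast gcd_mul_lcm a u
  have hg0 : (gcd a u : ℤ) ≠ 0 := by exact_mod_cast hg.ne'
  refine ⟨u / gcd a u, a / gcd a u, ?_, ediv_dvd_of_dvd hga, ?_, ?_⟩
  · rw [isCoprime_iff_gcd_eq_one, gcd_comm]
    exact gcd_ediv_gcd_ediv_gcd hg
  · refine mul_left_cancel₀ hg0 ?_
    rw [hgl, ← mul_assoc, Int.mul_ediv_cancel' hgu, mul_comm]
  · refine mul_left_cancel₀ hg0 ?_
    rw [hgl, ← mul_assoc, Int.mul_ediv_cancel' hga]

lemma gcd_gcd_dvd_sub {s y d : ℤ} (hcop : ∀ k, k ∣ s → k ∣ y → k ∣ d → IsUnit k) (m n : ℤ) :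
    (Nat.gcd (gcd (y + m * d) s) (gcd (y + n * d) s) : ℤ) ∣ n - m := by
  set c : ℤ := (Nat.gcd (gcd (y + m * d) s) (gcd (y + n * d) s) : ℤ)
  have hcs : c ∣ s := (natCast_dvd_natCast.2 (Nat.gcd_dvd_left _ _)).trans (gcd_dvd_right _ _)
  have hcm : c ∣ y + m * d :=
    (natCast_dvd_natCast.2 (Nat.gcd_dvd_left _ _)).trans (gcd_dvd_left _ _)
  have hcn : c ∣ y + n * d :=
    (natCast_dvd_natCast.2 (Nat.gcd_dvd_right _ _)).trans (gcd_dvd_left _ _)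
  have hcd : IsCoprime c d := IsRelPrime.isCoprime fun k hkc hkd =>
    hcop k (hkc.trans hcs) ((dvd_add_left (hkd.mul_left m)).1 (hkc.trans hcm)) hkd
  refine hcd.dvd_of_dvd_mul_right ?_
  rw [show (n - m) * d = y + n * d - (y + m * d) by ring]
  exact dvd_sub hcn hcm

lemma gcd_gcd_dvd_dist_of_lcm {a u b v s : ℤ} {x : ℕ → ℤ} (ha : 0 < a) (hu : 0 < u)
    (hab : IsCoprime a b) (huv : IsCoprime u v) (hs : s = lcm a u)
    (hx : ∀ i : ℕ, (x i : ℚ) = s * (b / a + ((i : ℚ) - 1) * (v / u))) (i j : ℕ) :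
    Nat.gcd (gcd (x i) s) (gcd (x j) s) ∣ Nat.dist i j := by
  obtain ⟨A, U, hAU, hUa, hsA, hsU⟩ := exists_isCoprime_lcm_eq ha hu
  rw [← hs] at hsA hsU
  have hxU (i : ℕ) : x i = A * b + ((i : ℤ) - 1) * (U * v) := by
    have hAq : (s : ℚ) = A * a := by exact_mod_cast hsA
    have hUq : (s : ℚ) = U * u := by exact_mod_cast hsU
    have hxq : (x i : ℚ) = A * b + ((i : ℚ) - 1) * (U * v) := by
      rw [hx]
      field_simp
      linear_combination (b * u) * hAq + ((i - 1) * v * a) * hUq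
    exact_mod_cast hxq
  have hcop : ∀ k, k ∣ s → k ∣ A * b → k ∣ U * v → IsUnit k := fun k hks =>
    isUnit_of_dvd_mul_of_isCoprime (hAU.symm.mul_right (hab.of_isCoprime_of_dvd_left hUa)) huv
      (hsU ▸ hks)
  have h := gcd_gcd_dvd_sub hcop ((i : ℤ) - 1) ((j : ℤ) - 1)
  rw [← hxU, ← hxU, natCast_dvd] at h
  convert h using 1
  unfold Nat.dist
  omega

end Int

theorem statement11_general (N : ℕ)
    (a u : ℤ) (ha : 0 < a) (hu : 0 < u) (b v : ℤ)
    (hab : Int.gcd a b = 1) (huv : Int.gcd u v = 1)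
    (s : ℤ) (hs : s = Int.lcm a u)
    (r : ℕ → ℚ) (hr : ∀ i : ℕ, r i = (b : ℚ) / (a : ℚ) + ((i : ℚ) - 1) * ((v : ℚ) / (u : ℚ)))
    (x : ℕ → ℤ) (hx : ∀ i : ℕ, (x i : ℚ) = (s : ℚ) * r i)
    (δ : ℝ) (hδ0 : 0 < δ) (m : ℕ) (hm : m = ⌈1 / δ⌉₊)
    (hbig : (∏ j ∈ Finset.Icc 1 (2 * m - 1), (Nat.factorial j : ℤ)) ≤ s) :
    (N / (2 * m) : ℕ) ≤
      ((Finset.Icc 1 N).filter fun i => (Int.gcd (x i) s : ℝ) ≤ (s : ℝ) ^ δ).card := by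
  have hgcd := Int.gcd_gcd_dvd_dist_of_lcm ha hu (Int.isCoprime_iff_gcd_eq_one.2 hab)
    (Int.isCoprime_iff_gcd_eq_one.2 huv) hs fun i => by rw [hx, hr]
  have hs0 : 0 < s := hs ▸ Int.natCast_pos.2 (Int.lcm_pos ha.ne' hu.ne')
  have hsR : ((s.natAbs : ℕ) : ℝ) = s := by rw [Nat.cast_natAbs, abs_of_pos hs0]
  have hm0 : 0 < m := hm ▸ Nat.ceil_pos.2 (by positivity)
  have hmδ : 1 ≤ δ * m := by
    have := hm ▸ Nat.le_ceil (1 / δ)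
    rwa [div_le_iff₀ hδ0, mul_comm] at this
  have hfact : (2 * m - 1).factorial ≤ s.natAbs := by
    have := (Int.le_of_dvd (prod_pos fun j _ => by positivity)
      (dvd_prod_of_mem (fun j : ℕ => (j.factorial : ℤ)) (mem_Icc.2 ⟨by omega, le_rfl⟩))).trans hbig
    omega
  refine le_card_filter_Icc_of_forall_exists_mem_Ico (fun c => ?_) N
  simpa only [hsR] using Nat.exists_mem_Ico_le_rpow (by omega) (by omega)
    (fun i => Int.gcd_dvd_natAbs_right _ _) hgcd hfact (by push_cast; linarith) c

theorem statement11 (N : ℕ) (hN : 0 < N)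
    (a u : ℤ) (ha : 0 < a) (hu : 0 < u) (b v : ℤ) (hv : v ≠ 0)
    (hab : Int.gcd a b = 1) (huv : Int.gcd u v = 1)
    (s : ℤ) (hs : s = Int.lcm a u)
    (r : ℕ → ℚ) (hr : ∀ i : ℕ, r i = (b : ℚ) / (a : ℚ) + ((i : ℚ) - 1) * ((v : ℚ) / (u : ℚ)))
    (x : ℕ → ℤ) (hx : ∀ i : ℕ, (x i : ℚ) = (s : ℚ) * r i)
    (δ : ℝ) (hδ0 : 0 < δ) (hδ1 : δ < 1) (m : ℕ) (hm : m = ⌈1 / δ⌉₊)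
    (hbig : (∏ j ∈ Finset.Icc 1 (2 * m - 1), (Nat.factorial j : ℤ)) ≤ s) :
    (N / (2 * m) : ℕ) ≤
      ((Finset.Icc 1 N).filter fun i => (Int.gcd (x i) s : ℝ) ≤ (s : ℝ) ^ δ).card :=
  statement11_general N a u ha hu b v hab huv s hs r hr x hx δ hδ0 m hm hbig
end

section
/- Let a, u be positive integers and b, v integers with v ≠ 0, gcd(a, b) = 1 and gcd(u, v) = 1. Set g = gcd(a, u), a' = a/g, u' = u/g and s = g·a'·u' (so s = lcm(a, u)). For n ≥ 1 let x_n = b·u' + (n−1)·v·a'. Then for all indices 1 ≤ i < j, the integer gcd(gcd(x_i, s), gcd(x_j, s)) divides j − i. -/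
open scoped TensorProduct

/-!
Every term of the progression `x n = b u' + (n - 1) v a'` is congruent to `b u'` modulo `a'`,
hence coprime to `a'`. So a common divisor `d` of `x n` and `s = a' u` is coprime to `a'`,
therefore divides `u` and is coprime to `v`. A common divisor of `x i`, `x j` and `s` thus
divides `x j - x i = (j - i) v a'` while being coprime to `v a'`, so it divides `j - i`.
-/

theorem Int.isCoprime_of_eq_gcd_mul {a u g a' u' : ℤ} (hg : g = Int.gcd a u) (hg0 : g ≠ 0)
    (ha : a = g * a') (hu : u = g * u') : IsCoprime a' u' := by
  have hga : a' = a / g := (Int.ediv_eq_of_eq_mul_right hg0 ha).symm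
  have hgu : u' = u / g := (Int.ediv_eq_of_eq_mul_right hg0 hu).symm
  rw [hga, hgu, hg]
  exact Int.isCoprime_iff_gcd_eq_one.mpr (Int.gcd_ediv_gcd_ediv_gcd (by omega))

theorem IsCoprime.of_dvd_add_mul_of_dvd_mul {R : Type*} [CommRing R] {a c k u v d : R}
    (hac : IsCoprime c a) (huv : IsCoprime u v) (hdx : d ∣ c + k * a) (hds : d ∣ a * u) :
    IsCoprime d (v * a) := by
  have hda : IsCoprime d a := (hac.add_mul_right_left k).of_isCoprime_of_dvd_left hdx
  have hdu : d ∣ u := hda.dvd_of_dvd_mul_left hds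
  exact (huv.of_isCoprime_of_dvd_left hdu).mul_right hda

theorem statement12_general (a u : ℤ) (ha : 0 < a) (b v : ℤ)
    (hab : Int.gcd a b = 1) (huv : Int.gcd u v = 1)
    (g a' u' s : ℤ) (hg : g = Int.gcd a u) (ha' : a = g * a') (hu' : u = g * u')
    (hs : s = g * a' * u')
    (x : ℕ → ℤ) (hx : ∀ n : ℕ, x n = b * u' + ((n : ℤ) - 1) * v * a')
    (i j : ℕ) :
    ((Int.gcd (Int.gcd (x i) s) (Int.gcd (x j) s) : ℤ)) ∣ ((j : ℤ) - (i : ℤ)) := by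
  set d : ℤ := ((Int.gcd (Int.gcd (x i) s) (Int.gcd (x j) s) : ℤ))
  have hdi : d ∣ x i := (Int.gcd_dvd_left _ _).trans (Int.gcd_dvd_left _ _)
  have hdj : d ∣ x j := (Int.gcd_dvd_right _ _).trans (Int.gcd_dvd_left _ _)
  have hds : d ∣ a' * u := by
    rw [hu', mul_left_comm, ← mul_assoc, ← hs]
    exact (Int.gcd_dvd_left _ _).trans (Int.gcd_dvd_right _ _)
  have hg0 : g ≠ 0 := by rintro rfl; omega
  have hbu : IsCoprime (b * u') a' :=
    ((Int.isCoprime_iff_gcd_eq_one.mpr hab).symm.of_isCoprime_of_dvd_right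
      ⟨g, ha'.trans (mul_comm _ _)⟩).mul_left (Int.isCoprime_of_eq_gcd_mul hg hg0 ha' hu').symm
  have hcop : IsCoprime d (v * a') :=
    hbu.of_dvd_add_mul_of_dvd_mul (k := ((i : ℤ) - 1) * v)
      (Int.isCoprime_iff_gcd_eq_one.mpr huv) (by rw [← hx]; exact hdi) hds
  have hstep : x j - x i = ((j : ℤ) - i) * (v * a') := by rw [hx i, hx j]; ring
  exact hcop.dvd_of_dvd_mul_right (hstep ▸ dvd_sub hdj hdi)

theorem statement12 (a u : ℤ) (ha : 0 < a) (hu : 0 < u) (b v : ℤ) (hv : v ≠ 0)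
    (hab : Int.gcd a b = 1) (huv : Int.gcd u v = 1)
    (g a' u' s : ℤ) (hg : g = Int.gcd a u) (ha' : a = g * a') (hu' : u = g * u')
    (hs : s = g * a' * u')
    (x : ℕ → ℤ) (hx : ∀ n : ℕ, x n = b * u' + ((n : ℤ) - 1) * v * a')
    (i j : ℕ) (hi : 1 ≤ i) (hij : i < j) :
    ((Int.gcd (Int.gcd (x i) s) (Int.gcd (x j) s) : ℤ)) ∣ ((j : ℤ) - (i : ℤ)) :=
  statement12_general a u ha b v hab huv g a' u' s hg ha' hu' hs x hx i j
end

section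
/- Let n be a positive integer and let g₁, …, g_n be positive integers such that gcd(g_i, g_j) divides j − i for all 1 ≤ i < j ≤ n. Then the product g₁·g₂⋯g_n divides (∏_{j=1}^{n−1} j!) · lcm(g₁, …, g_n). -/
open scoped TensorProduct

/-!
Fix a prime `p` and count the exponent of `p` in `∏ gᵢ` layer by layer: it is the sum over
`k ≥ 1` of the number of indices `i` with `p ^ k ∣ gᵢ`. Any two such indices satisfy
`p ^ k ∣ gcd (gᵢ, gⱼ) ∣ j - i`, so they form a single residue class modulo `p ^ k` inside an
interval of length `n - 1`, and there are at most `⌊(n - 1) / p ^ k⌋ + 1` of them. Summing over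
`k` up to the largest exponent `M` of `p` in the `gᵢ`, the quotients add up to at most the
exponent of `p` in `(n - 1)!` (Legendre), and the `M` extra ones are the exponent of `p` in the
least common multiple.
-/

open Finset
open scoped Nat

theorem Finset.sum_eq_sum_Icc_card_filter_le {ι : Type*} (S : Finset ι) (f : ι → ℕ) {M : ℕ}
    (hM : ∀ i ∈ S, f i ≤ M) :
    ∑ i ∈ S, f i = ∑ k ∈ Icc 1 M, #{i ∈ S | k ≤ f i} := by
  calc ∑ i ∈ S, f i = ∑ i ∈ S, #{k ∈ Icc 1 M | k ≤ f i} := by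
        refine sum_congr rfl fun i hi => ?_
        have hlayers : {k ∈ Icc 1 M | k ≤ f i} = Icc 1 (f i) := by
          ext k
          simp only [mem_filter, mem_Icc]
          have := hM i hi
          omega
        rw [hlayers, Nat.card_Icc, Nat.add_sub_cancel]
    _ = ∑ k ∈ Icc 1 M, #{i ∈ S | k ≤ f i} := by
        simp only [card_filter]
        exact sum_comm

theorem Finset.card_le_div_add_one_of_modEq {T : Finset ℕ} {a b d : ℕ} (hT : T ⊆ Icc a b)
    (hmod : ∀ i ∈ T, ∀ j ∈ T, i ≡ j [MOD d]) : #T ≤ (b - a) / d + 1 := by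
  have hbounds : ∀ i ∈ T, a ≤ i ∧ i ≤ b := fun i hi => mem_Icc.1 (hT hi)
  calc #T ≤ #(range ((b - a) / d + 1)) := by
        refine card_le_card_of_injOn (fun i => (i - a) / d) (fun i hi => ?_) fun i hi j hj hij => ?_
        · have := hbounds i hi
          exact mem_range.2 (Nat.lt_succ_of_le (Nat.div_le_div_right (by omega)))
        · have hi' := hbounds i hi
          have hj' := hbounds j hj
          have hrem : (i - a) % d = (j - a) % d :=
            Nat.ModEq.add_right_cancel' a (by
              rw [Nat.sub_add_cancel hi'.1, Nat.sub_add_cancel hj'.1]; exact hmod i hi j hj)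
          have hi_eq := Nat.div_add_mod (i - a) d
          have hj_eq := Nat.div_add_mod (j - a) d
          simp only at hij
          rw [hij, hrem, hj_eq] at hi_eq
          omega
    _ = (b - a) / d + 1 := card_range _

theorem Nat.sum_Icc_div_pow_le_factorization_factorial {p : ℕ} (hp : p.Prime) (L M : ℕ) :
    ∑ k ∈ Icc 1 M, L / p ^ k ≤ (L !).factorization p := by
  rw [Nat.factorization_factorial hp (b := M + Nat.log p L + 1) (by omega)]
  refine sum_le_sum_of_subset fun k hk => ?_
  rw [mem_Icc] at hk
  rw [mem_Ico]
  omega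

section GcdDividesDifference

variable {S : Finset ℕ} {a b : ℕ} {g : ℕ → ℕ}

theorem card_filter_dvd_le (hS : S ⊆ Icc a b)
    (hgcd : ∀ i ∈ S, ∀ j ∈ S, i < j → Nat.gcd (g i) (g j) ∣ j - i) (d : ℕ) :
    #{i ∈ S | d ∣ g i} ≤ (b - a) / d + 1 := by
  have hmodEq : ∀ i ∈ S, ∀ j ∈ S, i < j → d ∣ g i → d ∣ g j → i ≡ j [MOD d] :=
    fun i hi j hj hij hdi hdj =>
      (Nat.modEq_iff_dvd' hij.le).2 ((Nat.dvd_gcd hdi hdj).trans (hgcd i hi j hj hij))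
  refine card_le_div_add_one_of_modEq ((filter_subset _ _).trans hS) fun i hi j hj => ?_
  rw [mem_filter] at hi hj
  rcases lt_trichotomy i j with hij | rfl | hji
  · exact hmodEq i hi.1 j hj.1 hij hi.2 hj.2
  · rfl
  · exact (hmodEq j hj.1 i hi.1 hji hj.2 hi.2).symm

theorem factorization_prod_le_factorization_factorial_add_lcm (hS : S ⊆ Icc a b)
    (hgcd : ∀ i ∈ S, ∀ j ∈ S, i < j → Nat.gcd (g i) (g j) ∣ j - i) (hg : ∀ i ∈ S, g i ≠ 0)
    {p : ℕ} (hp : p.Prime) :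
    (∏ i ∈ S, g i).factorization p ≤ (b - a)!.factorization p + (S.lcm g).factorization p := by
  set M := S.sup fun i => (g i).factorization p
  have hM : M ≤ (S.lcm g).factorization p := by
    refine Finset.sup_le fun i hi => ?_
    exact (Nat.factorization_le_iff_dvd (hg i hi) (by simpa [Finset.lcm_eq_zero_iff] using hg))
      |>.2 (dvd_lcm hi) p
  have hlayer : ∀ k ∈ Icc 1 M, #{i ∈ S | k ≤ (g i).factorization p} ≤ (b - a) / p ^ k + 1 := by
    intro k _
    calc #{i ∈ S | k ≤ (g i).factorization p} = #{i ∈ S | p ^ k ∣ g i} := by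
          congr 1
          exact filter_congr fun i hi => (hp.pow_dvd_iff_le_factorization (hg i hi)).symm
      _ ≤ (b - a) / p ^ k + 1 := card_filter_dvd_le hS hgcd _
  calc (∏ i ∈ S, g i).factorization p = ∑ i ∈ S, (g i).factorization p := by
        rw [Nat.factorization_prod hg, Finsupp.finsetSum_apply]
    _ = ∑ k ∈ Icc 1 M, #{i ∈ S | k ≤ (g i).factorization p} :=
        sum_eq_sum_Icc_card_filter_le S _ fun i hi => le_sup (f := fun i => (g i).factorization p) hi
    _ ≤ ∑ k ∈ Icc 1 M, ((b - a) / p ^ k + 1) := sum_le_sum hlayer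
    _ = ∑ k ∈ Icc 1 M, (b - a) / p ^ k + M := by simp [sum_add_distrib]
    _ ≤ (b - a)!.factorization p + (S.lcm g).factorization p :=
        add_le_add (Nat.sum_Icc_div_pow_le_factorization_factorial hp _ _) hM

theorem prod_dvd_factorial_mul_lcm (hS : S ⊆ Icc a b)
    (hgcd : ∀ i ∈ S, ∀ j ∈ S, i < j → Nat.gcd (g i) (g j) ∣ j - i) :
    ∏ i ∈ S, g i ∣ (b - a)! * S.lcm g := by
  by_cases hg : ∀ i ∈ S, g i ≠ 0
  · have hlcm : S.lcm g ≠ 0 := by simpa [Finset.lcm_eq_zero_iff] using hg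
    refine (Nat.factorization_prime_le_iff_dvd (prod_ne_zero_iff.2 hg)
      (mul_ne_zero (Nat.factorial_ne_zero _) hlcm)).1 fun p hp => ?_
    rw [Nat.factorization_mul (Nat.factorial_ne_zero _) hlcm, Finsupp.add_apply]
    exact factorization_prod_le_factorization_factorial_add_lcm hS hgcd hg hp
  · push Not at hg
    rw [Finset.lcm_eq_zero_iff.2 hg, mul_zero]
    exact dvd_zero _

end GcdDividesDifference

theorem Nat.factorial_dvd_prod_Icc_factorial (n : ℕ) : n ! ∣ ∏ j ∈ Icc 1 n, j ! := by
  rcases Nat.eq_zero_or_pos n with rfl | hn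
  · simp
  · exact dvd_prod_of_mem _ (mem_Icc.2 ⟨hn, le_rfl⟩)

theorem statement13_general (n : ℕ) (g : ℕ → ℕ)
    (hgcd : ∀ i j : ℕ, 1 ≤ i → i < j → j ≤ n → Nat.gcd (g i) (g j) ∣ (j - i)) :
    (∏ i ∈ Finset.Icc 1 n, g i) ∣
      (∏ j ∈ Finset.Icc 1 (n - 1), Nat.factorial j) * (Finset.Icc 1 n).lcm g :=
  (prod_dvd_factorial_mul_lcm subset_rfl fun i hi j hj hij =>
      hgcd i j (mem_Icc.1 hi).1 hij (mem_Icc.1 hj).2).trans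
    (mul_dvd_mul_right (Nat.factorial_dvd_prod_Icc_factorial _) _)

theorem statement13 (n : ℕ) (hn : 0 < n) (g : ℕ → ℕ)
    (hg : ∀ i ∈ Finset.Icc 1 n, 0 < g i)
    (hgcd : ∀ i j : ℕ, 1 ≤ i → i < j → j ≤ n → Nat.gcd (g i) (g j) ∣ (j - i)) :
    (∏ i ∈ Finset.Icc 1 n, g i) ∣
      (∏ j ∈ Finset.Icc 1 (n - 1), Nat.factorial j) * (Finset.Icc 1 n).lcm g :=
  statement13_general n g hgcd
end
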